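/- arXiv:2403.04607 — 5 statements merged into one kernel-verified Lean document; each statement's English description precedes it below -/
import Mathlib

section
/- For every m ≥ 1, the numerical RAHMC proposal map F = (Φ⁻_ε)^m ∘ (Φ⁺_ε)^m composed with the momentum flip is an involution: (ν ∘ F) ∘ (ν ∘ F) = id on ℝᵈ × ℝᵈ. -/
open Matrix

noncomputable section

def mvec {d : ℕ} (A : Matrix (Fin d) (Fin d) ℝ) (p : EuclideanSpace ℝ (Fin d)) :
    EuclideanSpace ℝ (Fin d) :=
  WithLp.toLp 2 (A.mulVec p)

/-- The leapfrog step `P_ε` with potential `U` and inverse mass matrix `Sinv = Σ⁻¹`. -/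
def leapfrog {d : ℕ} (U : EuclideanSpace ℝ (Fin d) → ℝ) (Sinv : Matrix (Fin d) (Fin d) ℝ)
    (ε : ℝ) (z : EuclideanSpace ℝ (Fin d) × EuclideanSpace ℝ (Fin d)) :
    EuclideanSpace ℝ (Fin d) × EuclideanSpace ℝ (Fin d) :=
  let phalf := z.2 - (ε / 2) • gradient U z.1
  let q' := z.1 + ε • mvec Sinv phalf
  (q', phalf - (ε / 2) • gradient U q')

/-- The momentum-rescaling map `ξ_t(q, p) = (q, e^{γ t} p)`. -/
def xi {d : ℕ} (γ t : ℝ) (z : EuclideanSpace ℝ (Fin d) × EuclideanSpace ℝ (Fin d)) :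
    EuclideanSpace ℝ (Fin d) × EuclideanSpace ℝ (Fin d) :=
  (z.1, Real.exp (γ * t) • z.2)

/-- The repelling numerical step `Φ⁺_ε = ξ_{ε/2} ∘ P_ε ∘ ξ_{ε/2}`. -/
def stepPlus {d : ℕ} (U : EuclideanSpace ℝ (Fin d) → ℝ) (Sinv : Matrix (Fin d) (Fin d) ℝ)
    (γ ε : ℝ) :
    EuclideanSpace ℝ (Fin d) × EuclideanSpace ℝ (Fin d) →
      EuclideanSpace ℝ (Fin d) × EuclideanSpace ℝ (Fin d) :=
  xi γ (ε / 2) ∘ leapfrog U Sinv ε ∘ xi γ (ε / 2)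

/-- The attracting numerical step `Φ⁻_ε = ξ_{−ε/2} ∘ P_ε ∘ ξ_{−ε/2}`. -/
def stepMinus {d : ℕ} (U : EuclideanSpace ℝ (Fin d) → ℝ) (Sinv : Matrix (Fin d) (Fin d) ℝ)
    (γ ε : ℝ) :
    EuclideanSpace ℝ (Fin d) × EuclideanSpace ℝ (Fin d) →
      EuclideanSpace ℝ (Fin d) × EuclideanSpace ℝ (Fin d) :=
  xi γ (-(ε / 2)) ∘ leapfrog U Sinv ε ∘ xi γ (-(ε / 2))

/-- The momentum-flip map `ν(q, p) = (q, −p)`. -/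
def mflip {d : ℕ} (z : EuclideanSpace ℝ (Fin d) × EuclideanSpace ℝ (Fin d)) :
    EuclideanSpace ℝ (Fin d) × EuclideanSpace ℝ (Fin d) :=
  (z.1, -z.2)

/-!
Everything reduces to time reversibility of a single step. The leapfrog step satisfies
`P ∘ ν ∘ P = ν`, and `ξ_t` commutes with `ν` with `ξ_{-t}` as inverse, so
`Φ⁻ ∘ ν ∘ Φ⁺ = ν` and `Φ⁺ ∘ ν ∘ Φ⁻ = ν`: the flip turns the repelling dynamics into the
attracting one run backwards. Iterating, `(Φ⁻)^m ∘ ν ∘ (Φ⁺)^m = ν` and vice versa, and for any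
pair `f, g` with `f ∘ ν ∘ g = ν = g ∘ ν ∘ f` the map `ν ∘ f ∘ g` is an involution.
-/

namespace Function

variable {α : Type*} {ν f g : α → α}

theorem iterate_comp_reverse (h : ∀ z, f (ν (g z)) = ν z) (n : ℕ) (z : α) :
    f^[n] (ν (g^[n] z)) = ν z := by
  induction n generalizing z with
  | zero => rfl
  | succ n ih => rw [iterate_succ_apply' g, iterate_succ_apply f, h, ih]

theorem Involutive.comp_of_reverse (hν : Involutive ν) (hfg : ∀ z, f (ν (g z)) = ν z)
    (hgf : ∀ z, g (ν (f z)) = ν z) : Involutive (ν ∘ f ∘ g) := fun z => by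
  simp only [comp_apply, hgf, hfg, hν z]

end Function

section Reversibility

variable {d : ℕ}

theorem mflip_involutive : Function.Involutive (mflip (d := d)) := fun z => by
  simp [mflip]

theorem xi_mflip (γ t : ℝ) (z : EuclideanSpace ℝ (Fin d) × EuclideanSpace ℝ (Fin d)) :
    xi γ t (mflip z) = mflip (xi γ t z) := by
  simp [xi, mflip]

theorem xi_neg_xi (γ t : ℝ) (z : EuclideanSpace ℝ (Fin d) × EuclideanSpace ℝ (Fin d)) :
    xi γ (-t) (xi γ t z) = z := by
  simp only [xi, smul_smul, ← Real.exp_add, ← mul_add, neg_add_cancel, mul_zero, Real.exp_zero,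
    one_smul]

theorem mvec_neg (A : Matrix (Fin d) (Fin d) ℝ) (v : EuclideanSpace ℝ (Fin d)) :
    mvec A (-v) = -mvec A v := by
  simp [mvec, Matrix.mulVec_neg]

theorem leapfrog_mflip_leapfrog (U : EuclideanSpace ℝ (Fin d) → ℝ)
    (Sinv : Matrix (Fin d) (Fin d) ℝ) (ε : ℝ)
    (z : EuclideanSpace ℝ (Fin d) × EuclideanSpace ℝ (Fin d)) :
    leapfrog U Sinv ε (mflip (leapfrog U Sinv ε z)) = mflip z := by
  obtain ⟨q, p⟩ := z
  simp only [leapfrog, mflip]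
  set phalf := p - (ε / 2) • gradient U q with hphalf
  set q' := q + ε • mvec Sinv phalf with hq'
  have hp : -(phalf - (ε / 2) • gradient U q') - (ε / 2) • gradient U q' = -phalf := by abel
  have hq : q' + ε • mvec Sinv (-phalf) = q := by rw [hq', mvec_neg]; module
  rw [hp, hq, hphalf]
  congr 1
  module

/-- `Φ⁺` and `Φ⁻` are the instances `t = ε/2` and `t = -ε/2`. -/
theorem xi_leapfrog_xi_reverse (U : EuclideanSpace ℝ (Fin d) → ℝ)
    (Sinv : Matrix (Fin d) (Fin d) ℝ) (γ ε t : ℝ)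
    (z : EuclideanSpace ℝ (Fin d) × EuclideanSpace ℝ (Fin d)) :
    (xi γ (-t) ∘ leapfrog U Sinv ε ∘ xi γ (-t)) (mflip ((xi γ t ∘ leapfrog U Sinv ε ∘ xi γ t) z))
      = mflip z := by
  simp only [Function.comp_apply]
  rw [← xi_mflip, xi_neg_xi, leapfrog_mflip_leapfrog, xi_mflip, xi_neg_xi]

theorem stepMinus_mflip_stepPlus (U : EuclideanSpace ℝ (Fin d) → ℝ)
    (Sinv : Matrix (Fin d) (Fin d) ℝ) (γ ε : ℝ)
    (z : EuclideanSpace ℝ (Fin d) × EuclideanSpace ℝ (Fin d)) :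
    stepMinus U Sinv γ ε (mflip (stepPlus U Sinv γ ε z)) = mflip z :=
  xi_leapfrog_xi_reverse U Sinv γ ε (ε / 2) z

theorem stepPlus_mflip_stepMinus (U : EuclideanSpace ℝ (Fin d) → ℝ)
    (Sinv : Matrix (Fin d) (Fin d) ℝ) (γ ε : ℝ)
    (z : EuclideanSpace ℝ (Fin d) × EuclideanSpace ℝ (Fin d)) :
    stepPlus U Sinv γ ε (mflip (stepMinus U Sinv γ ε z)) = mflip z := by
  simpa only [stepPlus, stepMinus, neg_neg] using xi_leapfrog_xi_reverse U Sinv γ ε (-(ε / 2)) z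

end Reversibility

theorem rahmc_proposal_involution_general
    (d : ℕ) (ε : ℝ) (γ : ℝ)
    (U : EuclideanSpace ℝ (Fin d) → ℝ)
    (S : Matrix (Fin d) (Fin d) ℝ)
    (m : ℕ) :
    (mflip ∘ ((stepMinus U S⁻¹ γ ε)^[m] ∘ (stepPlus U S⁻¹ γ ε)^[m])) ∘
      (mflip ∘ ((stepMinus U S⁻¹ γ ε)^[m] ∘ (stepPlus U S⁻¹ γ ε)^[m])) = id :=
  (mflip_involutive.comp_of_reverse
    (Function.iterate_comp_reverse (stepMinus_mflip_stepPlus U S⁻¹ γ ε) m)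
    (Function.iterate_comp_reverse (stepPlus_mflip_stepMinus U S⁻¹ γ ε) m)).comp_self

/-- For every `m ≥ 1`, the numerical RAHMC proposal map
`F = (Φ⁻_ε)^m ∘ (Φ⁺_ε)^m` composed with the momentum flip is an involution:
`(ν ∘ F) ∘ (ν ∘ F) = id`. -/
theorem rahmc_proposal_involution
    (d : ℕ) (hd : 1 ≤ d) (ε : ℝ) (hε : 0 < ε) (γ : ℝ) (hγ : 0 < γ)
    (U : EuclideanSpace ℝ (Fin d) → ℝ) (hU : Differentiable ℝ U)
    (S : Matrix (Fin d) (Fin d) ℝ) (hSsymm : S.IsSymm) (hSpd : S.PosDef)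
    (m : ℕ) (hm : 1 ≤ m) :
    (mflip ∘ ((stepMinus U S⁻¹ γ ε)^[m] ∘ (stepPlus U S⁻¹ γ ε)^[m])) ∘
      (mflip ∘ ((stepMinus U S⁻¹ γ ε)^[m] ∘ (stepPlus U S⁻¹ γ ε)^[m])) = id :=
  rahmc_proposal_involution_general d ε γ U S m
end
end

section
/- Suppose U is twice continuously differentiable. Then the repelling numerical step Φ⁺_ε is differentiable, and its Jacobian J = D Φ⁺_ε(z) at every z ∈ ℝᵈ × ℝᵈ satisfies the conformal-symplectic identity Jᵀ Ω⁻¹ J = e^{γ ε} Ω⁻¹, where Ω⁻¹ is the 2d×2d block matrix [[0, −I_d],[I_d, 0]]. -/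
open Matrix

noncomputable section

/-- The product basis of the standard bases on `ℝᵈ × ℝᵈ`, indexed by `Fin d ⊕ Fin d`. -/
def phaseBasis (d : ℕ) :
    Module.Basis (Fin d ⊕ Fin d) ℝ (EuclideanSpace ℝ (Fin d) × EuclideanSpace ℝ (Fin d)) :=
  (PiLp.basisFun 2 ℝ (Fin d)).prod (PiLp.basisFun 2 ℝ (Fin d))

/-- The Jacobian matrix of a map on phase space at a point, in the standard basis. -/
def Jmat {d : ℕ}
    (Φ : EuclideanSpace ℝ (Fin d) × EuclideanSpace ℝ (Fin d) →
      EuclideanSpace ℝ (Fin d) × EuclideanSpace ℝ (Fin d))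
    (z : EuclideanSpace ℝ (Fin d) × EuclideanSpace ℝ (Fin d)) :
    Matrix (Fin d ⊕ Fin d) (Fin d ⊕ Fin d) ℝ :=
  LinearMap.toMatrix (phaseBasis d) (phaseBasis d) (fderiv ℝ Φ z).toLinearMap

/-- The block matrix `Ω⁻¹ = [[0, −I_d], [I_d, 0]]`. -/
def Ωinv (d : ℕ) : Matrix (Fin d ⊕ Fin d) (Fin d ⊕ Fin d) ℝ :=
  Matrix.fromBlocks 0 (-1) 1 0

/-! The repelling step factors as `Φ⁺_ε = ξ_{ε/2} ∘ K ∘ D ∘ K ∘ ξ_{ε/2}` with the kick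
`K(q, p) = (q, p - (ε/2) ∇U(q))` and the drift `D(q, p) = (q + ε Σ⁻¹ p, p)`. The Jacobians of
`K` and `D` are block unitriangular with symmetric off-diagonal blocks (a multiple of the Hessian
of `U`, symmetric by Schwarz's theorem, and `ε Σ⁻¹`), so they preserve `Ω⁻¹`, while the Jacobian
`diag(1, e^{γε/2})` of `ξ_{ε/2}` scales it by `e^{γε/2}`. By the chain rule the conformal factors
multiply along the composition, giving `e^{γε/2} · e^{γε/2} = e^{γε}`. -/

namespace LinearMap

variable {R M₁ M₂ N₁ N₂ ι₁ ι₂ κ₁ κ₂ : Type*} [CommSemiring R]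
  [AddCommMonoid M₁] [Module R M₁] [AddCommMonoid M₂] [Module R M₂]
  [AddCommMonoid N₁] [Module R N₁] [AddCommMonoid N₂] [Module R N₂]
  [Fintype ι₁] [Fintype ι₂] [Finite κ₁] [Finite κ₂] [DecidableEq ι₁] [DecidableEq ι₂]

theorem toMatrix_prod_coprod (v₁ : Module.Basis ι₁ R M₁) (v₂ : Module.Basis ι₂ R M₂)
    (w₁ : Module.Basis κ₁ R N₁) (w₂ : Module.Basis κ₂ R N₂)
    (a : M₁ →ₗ[R] N₁) (b : M₂ →ₗ[R] N₁) (c : M₁ →ₗ[R] N₂) (e : M₂ →ₗ[R] N₂) :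
    toMatrix (v₁.prod v₂) (w₁.prod w₂) ((a.coprod b).prod (c.coprod e)) =
      Matrix.fromBlocks (toMatrix v₁ w₁ a) (toMatrix v₂ w₁ b) (toMatrix v₁ w₂ c)
        (toMatrix v₂ w₂ e) := by
  ext (i | i) (j | j) <;> simp [toMatrix_apply, Module.Basis.prod_apply]

end LinearMap

namespace Matrix

variable {l R : Type*} [Fintype l] [DecidableEq l] [CommRing R]

/-- `J l R = [[0, -1], [1, 0]]`; in particular `Ωinv d` is `J (Fin d) ℝ` by definition. -/
def IsConformallySymplectic (c : R) (M : Matrix (l ⊕ l) (l ⊕ l) R) : Prop :=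
  Mᵀ * J l R * M = c • J l R

namespace IsConformallySymplectic

theorem mul {a b : R} {M N : Matrix (l ⊕ l) (l ⊕ l) R} (hM : M.IsConformallySymplectic a)
    (hN : N.IsConformallySymplectic b) : (M * N).IsConformallySymplectic (a * b) := by
  calc (M * N)ᵀ * J l R * (M * N) = Nᵀ * (Mᵀ * J l R * M) * N := by
        simp only [transpose_mul, Matrix.mul_assoc]
    _ = (a * b) • J l R := by rw [hM, Matrix.mul_smul, Matrix.smul_mul, hN, smul_smul]

end IsConformallySymplectic

theorem isConformallySymplectic_fromBlocks_one_smul (c : R) :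
    (fromBlocks 1 0 0 (c • 1) : Matrix (l ⊕ l) (l ⊕ l) R).IsConformallySymplectic c := by
  simp [IsConformallySymplectic, J, fromBlocks_transpose, fromBlocks_multiply, fromBlocks_smul]

theorem isConformallySymplectic_fromBlocks_shear_lower {A : Matrix l l R} (hA : A.IsSymm) :
    (fromBlocks 1 0 A 1 : Matrix (l ⊕ l) (l ⊕ l) R).IsConformallySymplectic 1 := by
  simp [IsConformallySymplectic, J, fromBlocks_transpose, fromBlocks_multiply, hA.eq]

theorem isConformallySymplectic_fromBlocks_shear_upper {A : Matrix l l R} (hA : A.IsSymm) :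
    (fromBlocks 1 A 0 1 : Matrix (l ⊕ l) (l ⊕ l) R).IsConformallySymplectic 1 := by
  simp [IsConformallySymplectic, J, fromBlocks_transpose, fromBlocks_multiply, hA.eq]

end Matrix

section Gradient

variable {F : Type*} [NormedAddCommGroup F] [InnerProductSpace ℝ F] [CompleteSpace F]
  {U : F → ℝ}

theorem contDiff_gradient {n : WithTop ℕ∞} (hU : ContDiff ℝ (n + 1) U) :
    ContDiff ℝ n (gradient U) :=
  (InnerProductSpace.toDual ℝ F).symm.contDiff.comp (hU.fderiv_right le_rfl)

theorem isSymmetric_fderiv_gradient (hU : ContDiff ℝ 2 U) (x : F) :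
    (fderiv ℝ (gradient U) x : F →ₗ[ℝ] F).IsSymmetric := by
  intro v w
  have hgrad : DifferentiableAt ℝ (gradient U) x :=
    ((contDiff_gradient (n := 1) hU).differentiable one_ne_zero) x
  have hdual : HasFDerivAt (fderiv ℝ U)
      ((InnerProductSpace.toDual ℝ F).toContinuousLinearEquiv.toContinuousLinearMap.comp
        (fderiv ℝ (gradient U) x)) x := by
    rw [← toDual_comp_gradient]
    exact (InnerProductSpace.toDual ℝ F).toContinuousLinearEquiv.hasFDerivAt.comp x
      hgrad.hasFDerivAt
  have h := hU.contDiffAt.isSymmSndFDerivAt (x := x) (by simp) w v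
  rw [hdual.fderiv] at h
  simpa [real_inner_comm] using h.symm

end Gradient

local notation "𝔼" d:max => EuclideanSpace ℝ (Fin d)

section PhaseSpace

variable {d : ℕ}

theorem Jmat_comp {f g : 𝔼 d × 𝔼 d → 𝔼 d × 𝔼 d} {z : 𝔼 d × 𝔼 d}
    (hf : DifferentiableAt ℝ f (g z)) (hg : DifferentiableAt ℝ g z) :
    Jmat (f ∘ g) z = Jmat f (g z) * Jmat g z := by
  rw [Jmat, Jmat, Jmat, fderiv_comp z hf hg, ContinuousLinearMap.toLinearMap_comp,
    LinearMap.toMatrix_comp _ (phaseBasis d)]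

theorem Jmat_eq_fromBlocks_of_hasFDerivAt {Φ : 𝔼 d × 𝔼 d → 𝔼 d × 𝔼 d} {z : 𝔼 d × 𝔼 d}
    {a b c e : 𝔼 d →L[ℝ] 𝔼 d} (hΦ : HasFDerivAt Φ ((a.coprod b).prod (c.coprod e)) z) :
    Jmat Φ z = fromBlocks (toEuclideanLin.symm a) (toEuclideanLin.symm b)
      (toEuclideanLin.symm c) (toEuclideanLin.symm e) := by
  rw [Jmat, hΦ.fderiv, phaseBasis]
  exact LinearMap.toMatrix_prod_coprod _ _ _ _ _ _ _ _

def IsConformallySymplecticMap (c : ℝ) (Φ : 𝔼 d × 𝔼 d → 𝔼 d × 𝔼 d) : Prop :=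
  Differentiable ℝ Φ ∧ ∀ z, (Jmat Φ z).IsConformallySymplectic c

theorem IsConformallySymplecticMap.comp {a b : ℝ} {Φ Ψ : 𝔼 d × 𝔼 d → 𝔼 d × 𝔼 d}
    (hΦ : IsConformallySymplecticMap a Φ) (hΨ : IsConformallySymplecticMap b Ψ) :
    IsConformallySymplecticMap (a * b) (Φ ∘ Ψ) :=
  ⟨hΦ.1.comp hΨ.1, fun z => by
    rw [Jmat_comp (hΦ.1 _) (hΨ.1 z)]
    exact (hΦ.2 _).mul (hΨ.2 z)⟩

def kick (F : 𝔼 d → 𝔼 d) (a : ℝ) (z : 𝔼 d × 𝔼 d) : 𝔼 d × 𝔼 d :=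
  (z.1, z.2 - a • F z.1)

def drift (A : Matrix (Fin d) (Fin d) ℝ) (ε : ℝ) (z : 𝔼 d × 𝔼 d) : 𝔼 d × 𝔼 d :=
  (z.1 + ε • mvec A z.2, z.2)

theorem leapfrog_eq_kick_comp_drift_comp_kick (U : 𝔼 d → ℝ) (A : Matrix (Fin d) (Fin d) ℝ)
    (ε : ℝ) :
    leapfrog U A ε = kick (gradient U) (ε / 2) ∘ drift A ε ∘ kick (gradient U) (ε / 2) :=
  rfl

theorem hasFDerivAt_xi (γ t : ℝ) (z : 𝔼 d × 𝔼 d) :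
    HasFDerivAt (xi γ t) (((ContinuousLinearMap.id ℝ _).coprod 0).prod
      ((0 : 𝔼 d →L[ℝ] 𝔼 d).coprod (Real.exp (γ * t) • ContinuousLinearMap.id ℝ _))) z := by
  refine (hasFDerivAt_fst.prodMk ((hasFDerivAt_snd (p := z)).const_smul
    (Real.exp (γ * t)))).congr_fderiv ?_
  ext <;> simp

theorem hasFDerivAt_drift (A : Matrix (Fin d) (Fin d) ℝ) (ε : ℝ) (z : 𝔼 d × 𝔼 d) :
    HasFDerivAt (drift A ε) (((ContinuousLinearMap.id ℝ _).coprod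
        (ε • toEuclideanCLM (n := Fin d) (𝕜 := ℝ) A)).prod
      ((0 : 𝔼 d →L[ℝ] 𝔼 d).coprod (ContinuousLinearMap.id ℝ _))) z := by
  have h : HasFDerivAt
      (fun z : 𝔼 d × 𝔼 d => (z.1 + ε • toEuclideanCLM (n := Fin d) (𝕜 := ℝ) A z.2, z.2)) _ z :=
    (hasFDerivAt_fst.add (((toEuclideanCLM (n := Fin d) (𝕜 := ℝ) A).hasFDerivAt.comp z
      hasFDerivAt_snd).const_smul ε)).prodMk hasFDerivAt_snd
  refine h.congr_fderiv ?_
  ext <;> simp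

theorem HasFDerivAt.kick {F : 𝔼 d → 𝔼 d} {F' : 𝔼 d →L[ℝ] 𝔼 d} {z : 𝔼 d × 𝔼 d}
    (hF : HasFDerivAt F F' z.1) (a : ℝ) :
    HasFDerivAt (kick F a) (((ContinuousLinearMap.id ℝ _).coprod 0).prod
      ((-a • F').coprod (ContinuousLinearMap.id ℝ _))) z :=
  (hasFDerivAt_fst.prodMk (hasFDerivAt_snd.sub ((hF.comp z hasFDerivAt_fst).const_smul a)))
    |>.congr_fderiv (by ext <;> simp)

theorem isSymm_toEuclideanLin_symm_fderiv_gradient {U : 𝔼 d → ℝ} (hU : ContDiff ℝ 2 U)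
    (x : 𝔼 d) : (toEuclideanLin.symm (fderiv ℝ (gradient U) x : 𝔼 d →ₗ[ℝ] 𝔼 d)).IsSymm :=
  isHermitian_iff_isSymm.mp <| isSymmetric_toEuclideanLin_iff.mp <| by
    simpa using isSymmetric_fderiv_gradient hU x

theorem isConformallySymplecticMap_xi (γ t : ℝ) :
    IsConformallySymplecticMap (Real.exp (γ * t)) (xi (d := d) γ t) := by
  refine ⟨fun z => (hasFDerivAt_xi γ t z).differentiableAt, fun z => ?_⟩
  rw [Jmat_eq_fromBlocks_of_hasFDerivAt (hasFDerivAt_xi γ t z)]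
  simpa [toLpLin_symm_id] using isConformallySymplectic_fromBlocks_one_smul (Real.exp (γ * t))

theorem isConformallySymplecticMap_drift {A : Matrix (Fin d) (Fin d) ℝ} (hA : A.IsSymm)
    (ε : ℝ) :
    IsConformallySymplecticMap 1 (drift A ε) := by
  refine ⟨fun z => (hasFDerivAt_drift A ε z).differentiableAt, fun z => ?_⟩
  rw [Jmat_eq_fromBlocks_of_hasFDerivAt (hasFDerivAt_drift A ε z)]
  simpa [toLpLin_symm_id, coe_toEuclideanCLM_eq_toEuclideanLin] using
    isConformallySymplectic_fromBlocks_shear_upper (hA.smul ε)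

theorem isConformallySymplecticMap_kick_gradient {U : 𝔼 d → ℝ} (hU : ContDiff ℝ 2 U) (a : ℝ) :
    IsConformallySymplecticMap 1 (kick (gradient U) a) := by
  have hderiv (z : 𝔼 d × 𝔼 d) := (((contDiff_gradient (n := 1) hU).differentiable one_ne_zero)
    z.1).hasFDerivAt.kick a
  refine ⟨fun z => (hderiv z).differentiableAt, fun z => ?_⟩
  rw [Jmat_eq_fromBlocks_of_hasFDerivAt (hderiv z)]
  simpa [toLpLin_symm_id] using isConformallySymplectic_fromBlocks_shear_lower
    ((isSymm_toEuclideanLin_symm_fderiv_gradient hU z.1).smul (-a))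

end PhaseSpace

theorem stepPlus_conformally_symplectic_general
    (d : ℕ) (ε : ℝ) (γ : ℝ)
    (U : EuclideanSpace ℝ (Fin d) → ℝ) (hU : ContDiff ℝ 2 U)
    (S : Matrix (Fin d) (Fin d) ℝ) (hSsymm : S.IsSymm) :
    Differentiable ℝ (stepPlus U S⁻¹ γ ε) ∧
      ∀ z : EuclideanSpace ℝ (Fin d) × EuclideanSpace ℝ (Fin d),
        (Jmat (stepPlus U S⁻¹ γ ε) z)ᵀ * Ωinv d * Jmat (stepPlus U S⁻¹ γ ε) z =
          Real.exp (γ * ε) • Ωinv d := by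
  have hxi := isConformallySymplecticMap_xi (d := d) γ (ε / 2)
  have hkick := isConformallySymplecticMap_kick_gradient hU (ε / 2)
  have hleapfrog := hkick.comp ((isConformallySymplecticMap_drift hSsymm.inv ε).comp hkick)
  have hfactor : Real.exp (γ * (ε / 2)) * (1 * (1 * 1) * Real.exp (γ * (ε / 2))) =
      Real.exp (γ * ε) := by
    rw [one_mul, one_mul, one_mul, ← Real.exp_add]
    ring_nf
  have hstep : IsConformallySymplecticMap (Real.exp (γ * ε)) (stepPlus U S⁻¹ γ ε) := by
    rw [stepPlus, leapfrog_eq_kick_comp_drift_comp_kick, ← hfactor]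
    exact hxi.comp (hleapfrog.comp hxi)
  exact hstep

/-- For `U` twice continuously differentiable, the repelling numerical
step `Φ⁺_ε` is differentiable and its Jacobian `J = DΦ⁺_ε(z)` satisfies the
conformal-symplectic identity `Jᵀ Ω⁻¹ J = e^{γ ε} Ω⁻¹` at every `z`. -/
theorem stepPlus_conformally_symplectic
    (d : ℕ) (hd : 1 ≤ d) (ε : ℝ) (hε : 0 < ε) (γ : ℝ) (hγ : 0 < γ)
    (U : EuclideanSpace ℝ (Fin d) → ℝ) (hU : ContDiff ℝ 2 U)
    (S : Matrix (Fin d) (Fin d) ℝ) (hSsymm : S.IsSymm) (hSpd : S.PosDef) :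
    Differentiable ℝ (stepPlus U S⁻¹ γ ε) ∧
      ∀ z : EuclideanSpace ℝ (Fin d) × EuclideanSpace ℝ (Fin d),
        (Jmat (stepPlus U S⁻¹ γ ε) z)ᵀ * Ωinv d * Jmat (stepPlus U S⁻¹ γ ε) z =
          Real.exp (γ * ε) • Ωinv d :=
  stepPlus_conformally_symplectic_general d ε γ U hU S hSsymm
end
end

section
/- Suppose U is twice continuously differentiable. For every m ≥ 1, the full numerical RAHMC proposal map F = (Φ⁻_ε)^m ∘ (Φ⁺_ε)^m is symplectic: its Jacobian J = D F(z) at every z ∈ ℝᵈ × ℝᵈ satisfies Jᵀ Ω⁻¹ J = Ω⁻¹, where Ω⁻¹ is the 2d×2d block matrix [[0, −I_d],[I_d, 0]]. -/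
open Matrix

noncomputable section

/-!
Leapfrog factors as kick ∘ drift ∘ kick with drift `(q, p) ↦ (q + ε Σ⁻¹ p, p)` and kick
`(q, p) ↦ (q, p - (ε/2) ∇U(q))`. Their Jacobians are shears by the symmetric blocks `ε Σ⁻¹`
and `-(ε/2) ∇²U(q)`, hence symplectic, while `ξ_t` has Jacobian `diag(1, e^{γt})` and so is
conformally symplectic with factor `e^{γt}`. Conformal factors multiply under composition,
so `Φ⁺_ε` has factor `e^{γε}`, `Φ⁻_ε` has factor `e^{-γε}`, and `(Φ⁻_ε)^m ∘ (Φ⁺_ε)^m` has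
factor `1`.
-/

namespace Rahmc

variable {d : ℕ}

local notation "E" => EuclideanSpace ℝ (Fin d)
local notation "e" => PiLp.basisFun 2 ℝ (Fin d)

lemma phaseBasis_inl (j : Fin d) : phaseBasis d (Sum.inl j) = (e j, 0) :=
  Prod.ext (Module.Basis.prod_apply_inl_fst _ _ _) (Module.Basis.prod_apply_inl_snd _ _ _)

lemma phaseBasis_inr (j : Fin d) : phaseBasis d (Sum.inr j) = (0, e j) :=
  Prod.ext (Module.Basis.prod_apply_inr_fst _ _ _) (Module.Basis.prod_apply_inr_snd _ _ _)

lemma Jmat_inl_inl (Φ : E × E → E × E) (z : E × E) (i j : Fin d) :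
    Jmat Φ z (Sum.inl i) (Sum.inl j) = (fderiv ℝ Φ z (e j, 0)).1 i := by
  rw [Jmat, LinearMap.toMatrix_apply, phaseBasis_inl, phaseBasis,
    Module.Basis.prod_repr_inl, PiLp.basisFun_repr]
  rfl

lemma Jmat_inl_inr (Φ : E × E → E × E) (z : E × E) (i j : Fin d) :
    Jmat Φ z (Sum.inl i) (Sum.inr j) = (fderiv ℝ Φ z (0, e j)).1 i := by
  rw [Jmat, LinearMap.toMatrix_apply, phaseBasis_inr, phaseBasis,
    Module.Basis.prod_repr_inl, PiLp.basisFun_repr]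
  rfl

lemma Jmat_inr_inl (Φ : E × E → E × E) (z : E × E) (i j : Fin d) :
    Jmat Φ z (Sum.inr i) (Sum.inl j) = (fderiv ℝ Φ z (e j, 0)).2 i := by
  rw [Jmat, LinearMap.toMatrix_apply, phaseBasis_inl, phaseBasis,
    Module.Basis.prod_repr_inr, PiLp.basisFun_repr]
  rfl

lemma Jmat_inr_inr (Φ : E × E → E × E) (z : E × E) (i j : Fin d) :
    Jmat Φ z (Sum.inr i) (Sum.inr j) = (fderiv ℝ Φ z (0, e j)).2 i := by
  rw [Jmat, LinearMap.toMatrix_apply, phaseBasis_inr, phaseBasis,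
    Module.Basis.prod_repr_inr, PiLp.basisFun_repr]
  rfl

lemma Jmat_comp {Φ Ψ : E × E → E × E} {z : E × E}
    (hΦ : DifferentiableAt ℝ Φ (Ψ z)) (hΨ : DifferentiableAt ℝ Ψ z) :
    Jmat (Φ ∘ Ψ) z = Jmat Φ (Ψ z) * Jmat Ψ z := by
  rw [Jmat, fderiv_comp z hΦ hΨ, ContinuousLinearMap.toLinearMap_comp,
    LinearMap.toMatrix_comp _ (phaseBasis d)]
  rfl

lemma Jmat_id (z : E × E) : Jmat id z = 1 := by
  rw [Jmat, fderiv_id, ContinuousLinearMap.coe_id, LinearMap.toMatrix_id]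

section Blocks

variable (A : Matrix (Fin d) (Fin d) ℝ)

lemma upperShear_transpose_mul_Ωinv_mul (hA : A.IsSymm) :
    (fromBlocks 1 A 0 1)ᵀ * Ωinv d * fromBlocks 1 A 0 1 = Ωinv d := by
  simp [Ωinv, fromBlocks_transpose, fromBlocks_multiply, hA.eq]

lemma lowerShear_transpose_mul_Ωinv_mul (hA : A.IsSymm) :
    (fromBlocks 1 0 A 1)ᵀ * Ωinv d * fromBlocks 1 0 A 1 = Ωinv d := by
  simp [Ωinv, fromBlocks_transpose, fromBlocks_multiply, hA.eq]

lemma momentumScale_transpose_mul_Ωinv_mul (a : ℝ) :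
    (fromBlocks (1 : Matrix (Fin d) (Fin d) ℝ) 0 0 (a • 1))ᵀ * Ωinv d *
      fromBlocks 1 0 0 (a • 1) = a • Ωinv d := by
  rw [Ωinv, fromBlocks_smul]
  simp [fromBlocks_transpose, fromBlocks_multiply]

end Blocks

def IsConformallySymplectic (c : ℝ) (Φ : E × E → E × E) : Prop :=
  ∀ z : E × E, DifferentiableAt ℝ Φ z ∧ (Jmat Φ z)ᵀ * Ωinv d * Jmat Φ z = c • Ωinv d

namespace IsConformallySymplectic

lemma comp {c c' : ℝ} {Φ Ψ : E × E → E × E} (hΦ : IsConformallySymplectic c Φ)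
    (hΨ : IsConformallySymplectic c' Ψ) : IsConformallySymplectic (c * c') (Φ ∘ Ψ) := by
  intro z
  obtain ⟨hΦd, hΦJ⟩ := hΦ (Ψ z)
  obtain ⟨hΨd, hΨJ⟩ := hΨ z
  refine ⟨hΦd.comp z hΨd, ?_⟩
  calc (Jmat (Φ ∘ Ψ) z)ᵀ * Ωinv d * Jmat (Φ ∘ Ψ) z
      = (Jmat Ψ z)ᵀ * ((Jmat Φ (Ψ z))ᵀ * Ωinv d * Jmat Φ (Ψ z)) * Jmat Ψ z := by
        simp only [Jmat_comp hΦd hΨd, transpose_mul, Matrix.mul_assoc]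
    _ = (c * c') • Ωinv d := by
        rw [hΦJ, Matrix.mul_smul, Matrix.smul_mul, hΨJ, smul_smul]

lemma id : IsConformallySymplectic 1 (id : E × E → E × E) := fun z =>
  ⟨differentiableAt_id, by simp [Jmat_id]⟩

lemma iterate {c : ℝ} {Φ : E × E → E × E} (h : IsConformallySymplectic c Φ) :
    ∀ m : ℕ, IsConformallySymplectic (c ^ m) Φ^[m]
  | 0 => by simpa using IsConformallySymplectic.id
  | m + 1 => by
    rw [Function.iterate_succ', pow_succ']
    exact h.comp (h.iterate m)

end IsConformallySymplectic

def xiCLM (γ t : ℝ) : (E × E) →L[ℝ] (E × E) :=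
  (ContinuousLinearMap.fst ℝ E E).prod (Real.exp (γ * t) • ContinuousLinearMap.snd ℝ E E)

lemma Jmat_xi (γ t : ℝ) (z : E × E) :
    Jmat (xi γ t) z = fromBlocks 1 0 0 (Real.exp (γ * t) • 1) := by
  have hξ : fderiv ℝ (xi γ t) z = xiCLM γ t := (xiCLM γ t).fderiv
  ext (i | i) (j | j)
  · rw [Jmat_inl_inl, hξ]
    simp [xiCLM, one_apply]
  · rw [Jmat_inl_inr, hξ]
    simp [xiCLM]
  · rw [Jmat_inr_inl, hξ]
    simp [xiCLM]
  · rw [Jmat_inr_inr, hξ]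
    simp [xiCLM, one_apply, mul_ite]

lemma isConformallySymplectic_xi (γ t : ℝ) :
    IsConformallySymplectic (Real.exp (γ * t)) (xi (d := d) γ t) := fun z =>
  ⟨(xiCLM γ t).differentiableAt, by
    rw [Jmat_xi]; exact momentumScale_transpose_mul_Ωinv_mul _⟩

def drift (M : Matrix (Fin d) (Fin d) ℝ) (ε : ℝ) : E × E → E × E :=
  fun z => (z.1 + ε • mvec M z.2, z.2)

def driftCLM (M : Matrix (Fin d) (Fin d) ℝ) (ε : ℝ) : (E × E) →L[ℝ] (E × E) :=
  (ContinuousLinearMap.fst ℝ E E +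
      ε • (toEuclideanCLM (n := Fin d) (𝕜 := ℝ) M).comp (ContinuousLinearMap.snd ℝ E E)).prod
    (ContinuousLinearMap.snd ℝ E E)

lemma Jmat_drift (M : Matrix (Fin d) (Fin d) ℝ) (ε : ℝ) (z : E × E) :
    Jmat (drift M ε) z = fromBlocks 1 (ε • M) 0 1 := by
  have hD : fderiv ℝ (drift M ε) z = driftCLM M ε := (driftCLM M ε).fderiv
  ext (i | i) (j | j)
  · rw [Jmat_inl_inl, hD]
    simp [driftCLM, one_apply]
  · rw [Jmat_inl_inr, hD]
    simp [driftCLM]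
  · rw [Jmat_inr_inl, hD]
    simp [driftCLM]
  · rw [Jmat_inr_inr, hD]
    simp [driftCLM, one_apply]

lemma isConformallySymplectic_drift {M : Matrix (Fin d) (Fin d) ℝ} (hM : M.IsSymm) (ε : ℝ) :
    IsConformallySymplectic 1 (drift M ε) := fun z =>
  ⟨(driftCLM M ε).differentiableAt, by
    rw [Jmat_drift, one_smul]
    exact upperShear_transpose_mul_Ωinv_mul _ (hM.smul ε)⟩

def kick (U : E → ℝ) (c : ℝ) : E × E → E × E :=
  fun z => (z.1, z.2 - c • gradient U z.1)

/-- The Riesz isomorphism `E* → E`, through which `gradient` is defined. -/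
def toDualSymmCLM : StrongDual ℝ E →L[ℝ] E :=
  (InnerProductSpace.toDual ℝ E).symm.toContinuousLinearEquiv.toContinuousLinearMap

lemma toDualSymmCLM_apply (ψ : StrongDual ℝ E) (i : Fin d) : toDualSymmCLM ψ i = ψ (e i) := by
  rw [PiLp.basisFun_apply, ← InnerProductSpace.toDual_symm_apply (𝕜 := ℝ),
    EuclideanSpace.inner_single_right]
  simp [toDualSymmCLM]

def hessian (U : E → ℝ) (q : E) : Matrix (Fin d) (Fin d) ℝ :=
  of fun i j => fderiv ℝ (fderiv ℝ U) q (e j) (e i)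

lemma isSymm_hessian {U : E → ℝ} (hU : ContDiff ℝ 2 U) (q : E) : (hessian U q).IsSymm :=
  ext fun i j => (hU.contDiffAt.isSymmSndFDerivAt (by simp)).eq (e i) (e j)

lemma hasFDerivAt_gradient {U : E → ℝ} (hU : ContDiff ℝ 2 U) (q : E) :
    HasFDerivAt (gradient U) (toDualSymmCLM.comp (fderiv ℝ (fderiv ℝ U) q)) q :=
  toDualSymmCLM.hasFDerivAt.comp q
    (((hU.fderiv_right (m := 1) (by norm_num)).differentiable (by norm_num) q).hasFDerivAt)

lemma hasFDerivAt_kick {U : E → ℝ} (hU : ContDiff ℝ 2 U) (c : ℝ) (z : E × E) :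
    HasFDerivAt (kick U c) ((ContinuousLinearMap.fst ℝ E E).prod
      (ContinuousLinearMap.snd ℝ E E - c • (toDualSymmCLM.comp
        (fderiv ℝ (fderiv ℝ U) z.1)).comp (ContinuousLinearMap.fst ℝ E E))) z :=
  hasFDerivAt_fst.prodMk
    (hasFDerivAt_snd.sub (((hasFDerivAt_gradient hU z.1).comp z hasFDerivAt_fst).const_smul c))

lemma Jmat_kick {U : E → ℝ} (hU : ContDiff ℝ 2 U) (c : ℝ) (z : E × E) :
    Jmat (kick U c) z = fromBlocks 1 0 (-c • hessian U z.1) 1 := by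
  have hK := (hasFDerivAt_kick hU c z).fderiv
  ext (i | i) (j | j)
  · rw [Jmat_inl_inl, hK]
    simp [one_apply]
  · rw [Jmat_inl_inr, hK]
    simp
  · rw [Jmat_inr_inl, hK]
    simp [toDualSymmCLM_apply, hessian]
  · rw [Jmat_inr_inr, hK]
    simp [one_apply]

lemma isConformallySymplectic_kick {U : E → ℝ} (hU : ContDiff ℝ 2 U) (c : ℝ) :
    IsConformallySymplectic 1 (kick U c) := fun z =>
  ⟨(hasFDerivAt_kick hU c z).differentiableAt, by
    rw [Jmat_kick hU, one_smul]
    exact lowerShear_transpose_mul_Ωinv_mul _ ((isSymm_hessian hU z.1).smul _)⟩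

lemma leapfrog_eq_kick_comp_drift_comp_kick (U : E → ℝ) (M : Matrix (Fin d) (Fin d) ℝ)
    (ε : ℝ) : leapfrog U M ε = kick U (ε / 2) ∘ drift M ε ∘ kick U (ε / 2) :=
  rfl

lemma isConformallySymplectic_leapfrog {U : E → ℝ} (hU : ContDiff ℝ 2 U)
    {M : Matrix (Fin d) (Fin d) ℝ} (hM : M.IsSymm) (ε : ℝ) :
    IsConformallySymplectic 1 (leapfrog U M ε) := by
  simpa [leapfrog_eq_kick_comp_drift_comp_kick] using (isConformallySymplectic_kick hU _).comp
    ((isConformallySymplectic_drift hM ε).comp (isConformallySymplectic_kick hU _))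

lemma isConformallySymplectic_xi_comp_comp_xi {Φ : E × E → E × E}
    (hΦ : IsConformallySymplectic 1 Φ) (γ t : ℝ) :
    IsConformallySymplectic (Real.exp (γ * (2 * t))) (xi γ t ∘ Φ ∘ xi γ t) := by
  convert (isConformallySymplectic_xi γ t).comp (hΦ.comp (isConformallySymplectic_xi γ t))
    using 1
  rw [one_mul, ← Real.exp_add]
  ring_nf

lemma isConformallySymplectic_stepPlus {U : E → ℝ} (hU : ContDiff ℝ 2 U)
    {M : Matrix (Fin d) (Fin d) ℝ} (hM : M.IsSymm) (γ ε : ℝ) :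
    IsConformallySymplectic (Real.exp (γ * ε)) (stepPlus U M γ ε) := by
  rw [stepPlus]
  convert isConformallySymplectic_xi_comp_comp_xi (isConformallySymplectic_leapfrog hU hM ε)
    γ (ε / 2) using 3
  ring

lemma isConformallySymplectic_stepMinus {U : E → ℝ} (hU : ContDiff ℝ 2 U)
    {M : Matrix (Fin d) (Fin d) ℝ} (hM : M.IsSymm) (γ ε : ℝ) :
    IsConformallySymplectic (Real.exp (-(γ * ε))) (stepMinus U M γ ε) := by
  rw [stepMinus]
  convert isConformallySymplectic_xi_comp_comp_xi (isConformallySymplectic_leapfrog hU hM ε)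
    γ (-(ε / 2)) using 3
  ring

end Rahmc

theorem rahmc_proposal_symplectic_general
    (d : ℕ) (ε : ℝ) (γ : ℝ)
    (U : EuclideanSpace ℝ (Fin d) → ℝ) (hU : ContDiff ℝ 2 U)
    (S : Matrix (Fin d) (Fin d) ℝ) (hSsymm : S.IsSymm)
    (m : ℕ) :
    ∀ z : EuclideanSpace ℝ (Fin d) × EuclideanSpace ℝ (Fin d),
      (Jmat ((stepMinus U S⁻¹ γ ε)^[m] ∘ (stepPlus U S⁻¹ γ ε)^[m]) z)ᵀ * Ωinv d *
          Jmat ((stepMinus U S⁻¹ γ ε)^[m] ∘ (stepPlus U S⁻¹ γ ε)^[m]) z =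
        Ωinv d := by
  intro z
  have hF := ((Rahmc.isConformallySymplectic_stepMinus hU hSsymm.inv γ ε).iterate m).comp
    ((Rahmc.isConformallySymplectic_stepPlus hU hSsymm.inv γ ε).iterate m)
  rw [← mul_pow, ← Real.exp_add, neg_add_cancel, Real.exp_zero, one_pow] at hF
  simpa using (hF z).2

/-- For `U` twice continuously differentiable and any `m ≥ 1`, the full
numerical RAHMC proposal map `F = (Φ⁻_ε)^m ∘ (Φ⁺_ε)^m` is symplectic: its Jacobian
`J = DF(z)` satisfies `Jᵀ Ω⁻¹ J = Ω⁻¹` at every `z`. -/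
theorem rahmc_proposal_symplectic
    (d : ℕ) (hd : 1 ≤ d) (ε : ℝ) (hε : 0 < ε) (γ : ℝ) (hγ : 0 < γ)
    (U : EuclideanSpace ℝ (Fin d) → ℝ) (hU : ContDiff ℝ 2 U)
    (S : Matrix (Fin d) (Fin d) ℝ) (hSsymm : S.IsSymm) (hSpd : S.PosDef)
    (m : ℕ) (hm : 1 ≤ m) :
    ∀ z : EuclideanSpace ℝ (Fin d) × EuclideanSpace ℝ (Fin d),
      (Jmat ((stepMinus U S⁻¹ γ ε)^[m] ∘ (stepPlus U S⁻¹ γ ε)^[m]) z)ᵀ * Ωinv d *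
          Jmat ((stepMinus U S⁻¹ γ ε)^[m] ∘ (stepPlus U S⁻¹ γ ε)^[m]) z =
        Ωinv d :=
  rahmc_proposal_symplectic_general d ε γ U hU S hSsymm m
end
end

section
/- Suppose U is twice continuously differentiable. For every m ≥ 1, the full numerical RAHMC proposal map F = (Φ⁻_ε)^m ∘ (Φ⁺_ε)^m is volume preserving: the determinant of its Jacobian D F(z) has absolute value 1 at every z ∈ ℝᵈ × ℝᵈ. -/
/-!
A leapfrog step is the composition of two momentum kicks `(q, p) ↦ (q, p - (ε/2) ∇U q)` and a
position drift `(q, p) ↦ (q + ε Σ⁻¹ p, p)`. Each is a shear of `ℝᵈ × ℝᵈ`, whose Jacobian is block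
unitriangular, so `|det DP_ε| = 1`. The rescaling `ξ_t` is linear with determinant `e^{γ t d}`,
hence `|det DΦ^±_ε| = e^{± γ ε d}` at every point, and by the chain rule the `m` repelling steps
are exactly compensated by the `m` attracting ones.
-/

open Matrix

noncomputable section

open Module

section ShearDet

variable {R M N : Type*} [CommRing R] [AddCommGroup M] [Module R M] [Module.Free R M]
  [Module.Finite R M] [AddCommGroup N] [Module R N] [Module.Free R N] [Module.Finite R N]

theorem LinearMap.det_prod_fst_snd_add (f : M →ₗ[R] N) :
    LinearMap.det ((fst R M N).prod (snd R M N + f ∘ₗ fst R M N)) = 1 := by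
  classical
  let bM := Free.chooseBasis R M
  let bN := Free.chooseBasis R N
  have hblocks : toMatrix (bM.prod bN) (bM.prod bN)
      ((fst R M N).prod (snd R M N + f ∘ₗ fst R M N)) =
        Matrix.fromBlocks 1 0 (toMatrix bM bN f) 1 := by
    ext (_ | _) (_ | _) <;>
      simp [toMatrix_apply, Matrix.one_apply, Finsupp.single_apply, eq_comm]
  rw [← det_toMatrix (bM.prod bN), hblocks, Matrix.det_fromBlocks_zero₁₂, Matrix.det_one,
    Matrix.det_one, one_mul]

theorem LinearMap.det_prod_fst_add_snd (g : N →ₗ[R] M) :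
    LinearMap.det ((fst R M N + g ∘ₗ snd R M N).prod (snd R M N)) = 1 := by
  classical
  let bM := Free.chooseBasis R M
  let bN := Free.chooseBasis R N
  have hblocks : toMatrix (bM.prod bN) (bM.prod bN)
      ((fst R M N + g ∘ₗ snd R M N).prod (snd R M N)) =
        Matrix.fromBlocks 1 (toMatrix bN bM g) 0 1 := by
    ext (_ | _) (_ | _) <;>
      simp [toMatrix_apply, Matrix.one_apply, Finsupp.single_apply, eq_comm]
  rw [← det_toMatrix (bM.prod bN), hblocks, Matrix.det_fromBlocks_zero₂₁, Matrix.det_one,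
    Matrix.det_one, one_mul]

end ShearDet

section AbsDetFDeriv

variable {E : Type*} [NormedAddCommGroup E] [NormedSpace ℝ E]

def HasAbsDetFDeriv (f : E → E) (c : ℝ) : Prop :=
  ∀ z, ∃ D : E →L[ℝ] E, HasFDerivAt f D z ∧ |LinearMap.det (D : E →ₗ[ℝ] E)| = c

theorem HasAbsDetFDeriv.abs_det_fderiv {f : E → E} {c : ℝ} (hf : HasAbsDetFDeriv f c)
    (z : E) :
    |LinearMap.det (fderiv ℝ f z : E →ₗ[ℝ] E)| = c := by
  obtain ⟨D, hD, hdet⟩ := hf z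
  rwa [hD.fderiv]

theorem ContinuousLinearMap.hasAbsDetFDeriv (L : E →L[ℝ] E) :
    HasAbsDetFDeriv L |LinearMap.det (L : E →ₗ[ℝ] E)| :=
  fun _ ↦ ⟨L, L.hasFDerivAt, rfl⟩

theorem HasAbsDetFDeriv.comp {f g : E → E} {a b : ℝ} (hg : HasAbsDetFDeriv g b)
    (hf : HasAbsDetFDeriv f a) : HasAbsDetFDeriv (g ∘ f) (b * a) := by
  intro z
  obtain ⟨Df, hDf, rfl⟩ := hf z
  obtain ⟨Dg, hDg, rfl⟩ := hg (f z)
  refine ⟨Dg.comp Df, hDg.comp z hDf, ?_⟩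
  rw [ContinuousLinearMap.toLinearMap_comp, LinearMap.det_comp, abs_mul]

theorem HasAbsDetFDeriv.iterate {f : E → E} {a : ℝ} (hf : HasAbsDetFDeriv f a) (m : ℕ) :
    HasAbsDetFDeriv f^[m] (a ^ m) := by
  induction m with
  | zero => simpa using (ContinuousLinearMap.id ℝ E).hasAbsDetFDeriv
  | succ m ih => simpa only [Function.iterate_succ', pow_succ'] using hf.comp ih

end AbsDetFDeriv

section ProdSpace

open ContinuousLinearMap

variable {E F : Type*} [NormedAddCommGroup E] [NormedSpace ℝ E] [FiniteDimensional ℝ E]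
  [NormedAddCommGroup F] [NormedSpace ℝ F] [FiniteDimensional ℝ F]

theorem hasAbsDetFDeriv_shear_snd {g : E → F} (hg : Differentiable ℝ g) :
    HasAbsDetFDeriv (fun z : E × F ↦ (z.1, z.2 + g z.1)) 1 := by
  intro z
  refine ⟨(fst ℝ E F).prod (snd ℝ E F + (fderiv ℝ g z.1).comp (fst ℝ E F)),
    hasFDerivAt_fst.prodMk (hasFDerivAt_snd.add ((hg z.1).hasFDerivAt.comp z hasFDerivAt_fst)),
    ?_⟩
  exact (congrArg abs (LinearMap.det_prod_fst_snd_add (fderiv ℝ g z.1 : E →ₗ[ℝ] F))).trans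
    abs_one

theorem hasAbsDetFDeriv_shear_fst {h : F → E} (hh : Differentiable ℝ h) :
    HasAbsDetFDeriv (fun z : E × F ↦ (z.1 + h z.2, z.2)) 1 := by
  intro z
  refine ⟨(fst ℝ E F + (fderiv ℝ h z.2).comp (snd ℝ E F)).prod (snd ℝ E F),
    (hasFDerivAt_fst.add ((hh z.2).hasFDerivAt.comp z hasFDerivAt_snd)).prodMk hasFDerivAt_snd,
    ?_⟩
  exact (congrArg abs (LinearMap.det_prod_fst_add_snd (fderiv ℝ h z.2 : F →ₗ[ℝ] E))).trans
    abs_one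

theorem hasAbsDetFDeriv_smul_snd (c : ℝ) :
    HasAbsDetFDeriv (fun z : E × F ↦ (z.1, c • z.2)) (|c| ^ finrank ℝ F) := by
  have h := ((ContinuousLinearMap.id ℝ E).prodMap (c • ContinuousLinearMap.id ℝ F)).hasAbsDetFDeriv
  rwa [coe_prodMap, LinearMap.det_prodMap, coe_id, toLinearMap_smul, coe_id, LinearMap.det_smul,
    LinearMap.det_id, LinearMap.det_id, one_mul, mul_one, abs_pow] at h

end ProdSpace

theorem ContDiff.differentiable_gradient {F : Type*} [NormedAddCommGroup F]
    [InnerProductSpace ℝ F] [CompleteSpace F] {U : F → ℝ} (hU : ContDiff ℝ 2 U) :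
    Differentiable ℝ (gradient U) :=
  (InnerProductSpace.toDual ℝ F).symm.differentiable.comp
    ((hU.fderiv_right (m := 1) (by norm_num)).differentiable one_ne_zero)

section RAHMC

variable {d : ℕ}

local notation "ℝᵈ" => EuclideanSpace ℝ (Fin d)

theorem mvec_eq_toEuclideanCLM (A : Matrix (Fin d) (Fin d) ℝ) :
    mvec A = Matrix.toEuclideanCLM (𝕜 := ℝ) A :=
  rfl

theorem leapfrog_eq_kick_comp_drift_comp_kick_s11 (U : ℝᵈ → ℝ) (Sinv : Matrix (Fin d) (Fin d) ℝ)
    (ε : ℝ) :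
    leapfrog U Sinv ε =
      (fun z : ℝᵈ × ℝᵈ ↦ (z.1, z.2 + -(ε / 2) • gradient U z.1)) ∘
        (fun z : ℝᵈ × ℝᵈ ↦ (z.1 + ε • mvec Sinv z.2, z.2)) ∘
        (fun z : ℝᵈ × ℝᵈ ↦ (z.1, z.2 + -(ε / 2) • gradient U z.1)) := by
  funext z
  simp [leapfrog, sub_eq_add_neg]

theorem hasAbsDetFDeriv_leapfrog {U : ℝᵈ → ℝ} (hU : ContDiff ℝ 2 U)
    (Sinv : Matrix (Fin d) (Fin d) ℝ) (ε : ℝ) : HasAbsDetFDeriv (leapfrog U Sinv ε) 1 := by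
  have hkick := hasAbsDetFDeriv_shear_snd (hU.differentiable_gradient.const_smul (-(ε / 2)))
  have hdrift := hasAbsDetFDeriv_shear_fst
    ((Matrix.toEuclideanCLM (𝕜 := ℝ) Sinv).differentiable.const_smul ε)
  rw [leapfrog_eq_kick_comp_drift_comp_kick_s11, mvec_eq_toEuclideanCLM]
  simpa using hkick.comp (hdrift.comp hkick)

theorem hasAbsDetFDeriv_xi (γ t : ℝ) :
    HasAbsDetFDeriv (xi (d := d) γ t) (Real.exp (γ * t) ^ d) := by
  have h := hasAbsDetFDeriv_smul_snd (E := ℝᵈ) (F := ℝᵈ) (Real.exp (γ * t))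
  rwa [abs_of_pos (Real.exp_pos _), finrank_euclideanSpace_fin] at h

theorem hasAbsDetFDeriv_xi_comp_leapfrog_comp_xi {U : ℝᵈ → ℝ} (hU : ContDiff ℝ 2 U)
    (Sinv : Matrix (Fin d) (Fin d) ℝ) (γ t ε : ℝ) :
    HasAbsDetFDeriv (xi γ t ∘ leapfrog U Sinv ε ∘ xi γ t) (Real.exp (γ * t) ^ (2 * d)) := by
  convert (hasAbsDetFDeriv_xi γ t).comp ((hasAbsDetFDeriv_leapfrog hU Sinv ε).comp
    (hasAbsDetFDeriv_xi γ t)) using 1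
  ring

end RAHMC

theorem rahmc_proposal_volume_preserving_general
    (d : ℕ) (ε : ℝ) (γ : ℝ)
    (U : EuclideanSpace ℝ (Fin d) → ℝ) (hU : ContDiff ℝ 2 U)
    (S : Matrix (Fin d) (Fin d) ℝ)
    (m : ℕ) :
    ∀ z : EuclideanSpace ℝ (Fin d) × EuclideanSpace ℝ (Fin d),
      |LinearMap.det
        (fderiv ℝ ((stepMinus U S⁻¹ γ ε)^[m] ∘ (stepPlus U S⁻¹ γ ε)^[m]) z).toLinearMap| =
      1 := by
  have hplus : HasAbsDetFDeriv (stepPlus U S⁻¹ γ ε) (Real.exp (γ * (ε / 2)) ^ (2 * d)) :=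
    hasAbsDetFDeriv_xi_comp_leapfrog_comp_xi hU S⁻¹ γ (ε / 2) ε
  have hminus : HasAbsDetFDeriv (stepMinus U S⁻¹ γ ε) (Real.exp (γ * -(ε / 2)) ^ (2 * d)) :=
    hasAbsDetFDeriv_xi_comp_leapfrog_comp_xi hU S⁻¹ γ (-(ε / 2)) ε
  intro z
  rw [((hminus.iterate m).comp (hplus.iterate m)).abs_det_fderiv z, ← mul_pow, ← mul_pow,
    ← Real.exp_add, mul_neg, neg_add_cancel, Real.exp_zero, one_pow, one_pow]

/-- For `U` twice continuously differentiable and any `m ≥ 1`, the full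
numerical RAHMC proposal map `F = (Φ⁻_ε)^m ∘ (Φ⁺_ε)^m` is volume preserving: the
determinant of its Jacobian `DF(z)` has absolute value `1` at every `z`. -/
theorem rahmc_proposal_volume_preserving
    (d : ℕ) (hd : 1 ≤ d) (ε : ℝ) (hε : 0 < ε) (γ : ℝ) (hγ : 0 < γ)
    (U : EuclideanSpace ℝ (Fin d) → ℝ) (hU : ContDiff ℝ 2 U)
    (S : Matrix (Fin d) (Fin d) ℝ) (hSsymm : S.IsSymm) (hSpd : S.PosDef)
    (m : ℕ) (hm : 1 ≤ m) :
    ∀ z : EuclideanSpace ℝ (Fin d) × EuclideanSpace ℝ (Fin d),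
      |LinearMap.det
        (fderiv ℝ ((stepMinus U S⁻¹ γ ε)^[m] ∘ (stepPlus U S⁻¹ γ ε)^[m]) z).toLinearMap| =
      1 :=
  rahmc_proposal_volume_preserving_general d ε γ U hU S m
end
end

section
/- Let Φ : ℝ^{2d} → ℝ^{2d} be a measurable involution (Φ ∘ Φ = id) that preserves Lebesgue measure, let H : ℝ^{2d} → ℝ be measurable, and define the acceptance probability α(z) = min{1, exp(H(z) − H(Φ(z)))}. Then the Metropolis–Hastings detailed-balance identity holds: for all measurable sets A, B ⊆ ℝ^{2d}, ∫_A α(z) 1_B(Φ(z)) e^{−H(z)} dz = ∫_B α(z) 1_A(Φ(z)) e^{−H(z)} dz. -/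
open MeasureTheory

noncomputable section

/-- Let `Φ` be a measurable involution of `ℝ^{2d}` preserving Lebesgue
measure, `H` measurable with `e^{−H}` integrable, and let
`α(z) = min{1, exp(H(z) − H(Φ(z)))}` be the acceptance probability. Then the
Metropolis–Hastings detailed-balance identity holds: for all measurable sets `A, B`,
`∫_A α(z) 1_B(Φ(z)) e^{−H(z)} dz = ∫_B α(z) 1_A(Φ(z)) e^{−H(z)} dz`. -/
theorem metropolis_detailed_balance
    (d : ℕ) (hd : 1 ≤ d)
    (Φ : EuclideanSpace ℝ (Fin (2 * d)) → EuclideanSpace ℝ (Fin (2 * d)))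
    (hΦmeas : Measurable Φ)
    (hΦinv : Φ ∘ Φ = id)
    (hΦpres : MeasurePreserving Φ
      (volume : Measure (EuclideanSpace ℝ (Fin (2 * d)))) volume)
    (H : EuclideanSpace ℝ (Fin (2 * d)) → ℝ)
    (hHmeas : Measurable H)
    (hint : Integrable (fun z => Real.exp (-H z))
      (volume : Measure (EuclideanSpace ℝ (Fin (2 * d)))))
    (A B : Set (EuclideanSpace ℝ (Fin (2 * d))))
    (hA : MeasurableSet A) (hB : MeasurableSet B) :
    ∫ z in A,
        min 1 (Real.exp (H z - H (Φ z))) * B.indicator (fun _ => (1 : ℝ)) (Φ z) *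
          Real.exp (-H z) =
      ∫ z in B,
        min 1 (Real.exp (H z - H (Φ z))) * A.indicator (fun _ => (1 : ℝ)) (Φ z) *
          Real.exp (-H z) := by
  have hΦΦ : ∀ z, Φ (Φ z) = z := fun z => congrFun hΦinv z
  -- pointwise identity: α(z) e^{-H z} = min (e^{-H z}) (e^{-H (Φ z)})
  have hpt : ∀ z, min 1 (Real.exp (H z - H (Φ z))) * Real.exp (-H z)
      = min (Real.exp (-H z)) (Real.exp (-H (Φ z))) := by
    intro z
    rw [min_mul_of_nonneg _ _ (Real.exp_nonneg _), one_mul, ← Real.exp_add]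
    ring_nf
  set g : EuclideanSpace ℝ (Fin (2 * d)) → ℝ := fun z =>
    A.indicator (fun _ => (1 : ℝ)) z * B.indicator (fun _ => (1 : ℝ)) (Φ z) *
      min (Real.exp (-H z)) (Real.exp (-H (Φ z))) with hg
  let e : EuclideanSpace ℝ (Fin (2 * d)) ≃ᵐ EuclideanSpace ℝ (Fin (2 * d)) :=
    { toFun := Φ, invFun := Φ, left_inv := hΦΦ, right_inv := hΦΦ,
      measurable_toFun := hΦmeas, measurable_invFun := hΦmeas }
  have heΦ : (e : EuclideanSpace ℝ (Fin (2 * d)) → EuclideanSpace ℝ (Fin (2 * d))) = Φ := rfl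
  have hchange : ∫ z, g (Φ z) = ∫ z, g z := by
    rw [← heΦ]
    exact hΦpres.integral_comp e.measurableEmbedding g
  calc
    ∫ z in A, min 1 (Real.exp (H z - H (Φ z))) * B.indicator (fun _ => (1 : ℝ)) (Φ z) *
        Real.exp (-H z) = ∫ z, g z := by
      rw [← integral_indicator hA]
      congr 1
      funext z
      rw [hg]
      by_cases hz : z ∈ A
      · simp only [Set.indicator_of_mem hz, one_mul]
        rw [mul_right_comm, hpt z, mul_comm]
      · simp [Set.indicator_of_notMem hz]
    _ = ∫ z, g (Φ z) := hchange.symm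
    _ = ∫ z in B, min 1 (Real.exp (H z - H (Φ z))) * A.indicator (fun _ => (1 : ℝ)) (Φ z) *
        Real.exp (-H z) := by
      rw [← integral_indicator hB]
      congr 1
      funext z
      rw [hg]
      simp only [hΦΦ]
      by_cases hz : z ∈ B
      · simp only [Set.indicator_of_mem hz, mul_one, one_mul]
        rw [min_comm, ← hpt z]; ring
      · simp [Set.indicator_of_notMem hz]
end
end
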